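/- Let S be a commutative semiring and H a Hopf S-semialgebra. Then H admits a normalized left integral in H (an element x ∈ H with h·x = ε(h)·x for all h ∈ H and ε(x) = 1_S) if and only if H is separable, i.e., there exists e = Σ e^1 ⊗ e^2 ∈ H ⊗_S H such that Σ h·e^1 ⊗ e^2 = Σ e^1 ⊗ e^2·h for all h ∈ H and Σ e^1·e^2 = 1_H. -/

import Mathlib

/-!
For `φ : C → A` let `γ_φ (c ⊗ a) = ∑ c₍₁₎ ⊗ φ(c₍₂₎) a`. By coassociativity
`γ_(φ * ψ) = γ_φ ∘ γ_ψ` for the convolution product, so for a Hopf algebra `β = γ_id` is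
bijective with inverse `Ψ = γ_𝔞`. Since `β ((h ⊗ 1) t) = Δh · β t` and `β` commutes with right multiplication
by `1 ⊗ h`, while a left integral `x` satisfies `Δh · (x ⊗ 1) = x ⊗ h`, the element
`e = Ψ (x ⊗ 1) = ∑ x₍₁₎ ⊗ 𝔞(x₍₂₎)` has `(h ⊗ 1) e = Ψ (x ⊗ h) = e (1 ⊗ h)`, and
`∑ x₍₁₎ 𝔞(x₍₂₎) = ε(x) 1 = 1`.

Conversely `x = ∑ e¹ ε(e²)` is a left integral: `h x` and `ε(h) x` are the images of
`(h ⊗ 1) e = e (1 ⊗ h)` under `id ⊗ ε`, and `ε(x) = ε(∑ e¹ e²) = 1`.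
-/

open TensorProduct Coalgebra LinearMap WithConv

section Coalgebra
variable {R C A : Type*} [CommSemiring R] [AddCommMonoid C] [Module R C] [Coalgebra R C]
  [Semiring A] [Algebra R A]

/-- For `φ = id` and `C = A` a Hopf algebra this is the canonical (Galois) map
`c ⊗ a ↦ ∑ c₍₁₎ ⊗ c₍₂₎ a`. -/
noncomputable def galoisMap (φ : WithConv (C →ₗ[R] A)) : C ⊗[R] A →ₗ[R] C ⊗[R] A :=
  lTensor C (mul' R A) ∘ₗ (TensorProduct.assoc R C A A).toLinearMap ∘ₗ
    rTensor A (lTensor C φ.ofConv ∘ₗ comul)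

lemma galoisMap_tmul (φ : WithConv (C →ₗ[R] A)) (c : C) (a : A) {ι : Type*}
    (𝓡 : Repr R c ι) :
    galoisMap φ (c ⊗ₜ a) = ∑ i ∈ 𝓡.index, 𝓡.left i ⊗ₜ (φ (𝓡.right i) * a) := by
  simp [galoisMap, ← 𝓡.eq, sum_tmul]

lemma galoisMap_tmul_one (φ : WithConv (C →ₗ[R] A)) (c : C) :
    galoisMap φ (c ⊗ₜ 1) = lTensor C φ.ofConv (comul c) := by
  simp [galoisMap_tmul φ c 1 (ℛ R c), ← (ℛ R c).eq]

lemma galoisMap_one : galoisMap (1 : WithConv (C →ₗ[R] A)) = LinearMap.id := by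
  refine TensorProduct.ext' fun c a ↦ ?_
  simpa only [galoisMap_tmul _ c a (ℛ R c), map_sum, lTensor_tmul, convOne_apply, coe_comp,
    Function.comp_apply, Algebra.linearMap_apply, mulRight_apply, map_one, one_mul, LinearMap.id_apply] using
    congr(lTensor C (mulRight R a ∘ₗ Algebra.linearMap R A) $(sum_tmul_counit_eq (ℛ R c)))

lemma galoisMap_mul (φ ψ : WithConv (C →ₗ[R] A)) :
    galoisMap (φ * ψ) = galoisMap φ ∘ₗ galoisMap ψ := by
  refine TensorProduct.ext' fun c a ↦ ?_
  have coassoc := congr(lTensor C (mulRight R a ∘ₗ mul' R A ∘ₗ map φ.ofConv ψ.ofConv)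
    $(sum_tmul_tmul_eq (ℛ R c) (fun i ↦ ℛ R ((ℛ R c).left i)) (fun i ↦ ℛ R ((ℛ R c).right i))))
  simp only [map_sum, lTensor_tmul, map_tmul, coe_comp, Function.comp_apply, mul'_apply,
    mulRight_apply, mul_assoc] at coassoc
  simp only [galoisMap_tmul _ c a (ℛ R c), (ℛ R _).convMul_apply, map_sum,
    galoisMap_tmul _ _ _ (ℛ R _), Finset.sum_mul, tmul_sum, mul_assoc, LinearMap.comp_apply]
  exact coassoc.symm

lemma galoisMap_map_mulRight (φ : WithConv (C →ₗ[R] A)) (a : A) (t : C ⊗[R] A) :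
    galoisMap φ (map LinearMap.id (mulRight R a) t) =
      map LinearMap.id (mulRight R a) (galoisMap φ t) := by
  induction t using TensorProduct.induction_on with
  | zero => simp
  | tmul c b => simp [galoisMap_tmul _ c _ (ℛ R c), map_sum, mul_assoc]
  | add t₁ t₂ h₁ h₂ => simp only [map_add, h₁, h₂]

end Coalgebra

section Algebra
variable {R A : Type*} [CommSemiring R] [Semiring A] [Algebra R A]

variable (R) in
def IsCasimir (e : A ⊗[R] A) : Prop :=
  ∀ a : A, map (mulLeft R a) LinearMap.id e = map LinearMap.id (mulRight R a) e

lemma rid_lTensor_map_mulLeft (f : A →ₗ[R] R) (a : A) (t : A ⊗[R] A) :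
    TensorProduct.rid R A (lTensor A f (map (mulLeft R a) LinearMap.id t)) =
      a * TensorProduct.rid R A (lTensor A f t) := by
  induction t using TensorProduct.induction_on with
  | zero => simp
  | tmul b c => simp
  | add t₁ t₂ h₁ h₂ => simp only [map_add, h₁, h₂, mul_add]

end Algebra

section Bialgebra
variable {R H : Type*} [CommSemiring R] [Semiring H] [Bialgebra R H]

variable (R) in
def IsLeftIntegral (x : H) : Prop :=
  ∀ h : H, h * x = counit (R := R) h • x

lemma galoisMap_id_tmul (c a : H) :
    galoisMap (toConv (LinearMap.id : H →ₗ[R] H)) (c ⊗ₜ a) = comul c * (1 ⊗ₜ a) := by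
  simp [galoisMap_tmul _ c a (ℛ R c), ← (ℛ R c).eq, Finset.sum_mul]

lemma galoisMap_id_map_mulLeft (h : H) (t : H ⊗[R] H) :
    galoisMap (toConv LinearMap.id) (map (mulLeft R h) LinearMap.id t) =
      comul h * galoisMap (toConv LinearMap.id) t := by
  induction t using TensorProduct.induction_on with
  | zero => simp
  | tmul a b => simp [galoisMap_id_tmul, mul_assoc]
  | add t₁ t₂ h₁ h₂ => simp only [map_add, h₁, h₂, mul_add]

lemma IsLeftIntegral.comul_mul_tmul_one {x : H} (hx : IsLeftIntegral R x) (h : H) :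
    comul h * (x ⊗ₜ[R] 1) = x ⊗ₜ h := by
  rw [← (ℛ R h).eq]
  simp only [Finset.sum_mul, Algebra.TensorProduct.tmul_mul_tmul, mul_one, hx _, smul_tmul,
    ← tmul_sum, sum_counit_smul]

lemma rid_lTensor_counit_map_mulRight (h : H) (t : H ⊗[R] H) :
    TensorProduct.rid R H (lTensor H counit (map LinearMap.id (mulRight R h) t)) =
      counit (R := R) h • TensorProduct.rid R H (lTensor H counit t) := by
  induction t using TensorProduct.induction_on with
  | zero => simp
  | tmul b c => simp [mul_comm, mul_smul]
  | add t₁ t₂ h₁ h₂ => simp only [map_add, h₁, h₂, smul_add]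

lemma counit_rid_lTensor_counit (t : H ⊗[R] H) :
    counit (R := R) (TensorProduct.rid R H (lTensor H counit t)) = counit (mul' R H t) := by
  induction t using TensorProduct.induction_on with
  | zero => simp
  | tmul b c => simp [mul_comm]
  | add t₁ t₂ h₁ h₂ => simp only [map_add, h₁, h₂]

lemma IsCasimir.isLeftIntegral {e : H ⊗[R] H} (he : IsCasimir R e) :
    IsLeftIntegral R (TensorProduct.rid R H (lTensor H counit e)) := fun h ↦ by
  rw [← rid_lTensor_map_mulLeft, he h, rid_lTensor_counit_map_mulRight]

end Bialgebra

section HopfAlgebra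
variable {R H : Type*} [CommSemiring R] [Semiring H] [HopfAlgebra R H]

lemma galoisMap_antipode_galoisMap_id (t : H ⊗[R] H) :
    galoisMap (toConv (HopfAlgebra.antipode R)) (galoisMap (toConv LinearMap.id) t) = t := by
  rw [← LinearMap.comp_apply, ← galoisMap_mul, antipode_mul_id, galoisMap_one, LinearMap.id_apply]

lemma galoisMap_id_galoisMap_antipode (t : H ⊗[R] H) :
    galoisMap (toConv LinearMap.id) (galoisMap (toConv (HopfAlgebra.antipode R)) t) = t := by
  rw [← LinearMap.comp_apply, ← galoisMap_mul, id_mul_antipode, galoisMap_one, LinearMap.id_apply]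

lemma IsLeftIntegral.isCasimir {x : H} (hx : IsLeftIntegral R x) :
    IsCasimir R (lTensor H (HopfAlgebra.antipode R) (comul x)) := fun h ↦ by
  set β := galoisMap (toConv (LinearMap.id : H →ₗ[R] H))
  set Ψ := galoisMap (toConv (HopfAlgebra.antipode R : H →ₗ[R] H))
  have he : Ψ (x ⊗ₜ 1) = lTensor H (HopfAlgebra.antipode R) (comul x) := galoisMap_tmul_one _ x
  rw [← he]
  calc map (mulLeft R h) LinearMap.id (Ψ (x ⊗ₜ 1))
      = Ψ (comul h * β (Ψ (x ⊗ₜ 1))) := by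
        rw [← galoisMap_id_map_mulLeft, galoisMap_antipode_galoisMap_id]
    _ = Ψ (map LinearMap.id (mulRight R h) (x ⊗ₜ 1)) := by
        rw [galoisMap_id_galoisMap_antipode, hx.comul_mul_tmul_one]; simp
    _ = map LinearMap.id (mulRight R h) (Ψ (x ⊗ₜ 1)) := galoisMap_map_mulRight _ _ _

end HopfAlgebra

theorem normalized_left_integral_iff_separable
    (S : Type*) [CommSemiring S] (H : Type*) [Semiring H] [HopfAlgebra S H] :
    (∃ x : H, (∀ h : H, h * x = Coalgebra.counit (R := S) h • x) ∧
        Coalgebra.counit (R := S) x = 1) ↔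
      (∃ e : H ⊗[S] H,
        (∀ h : H,
          TensorProduct.map (LinearMap.mulLeft S h) LinearMap.id e =
            TensorProduct.map LinearMap.id (LinearMap.mulRight S h) e) ∧
        LinearMap.mul' S H e = 1) := by
  constructor
  · rintro ⟨x, hx, hε⟩
    refine ⟨_, IsLeftIntegral.isCasimir hx, ?_⟩
    rw [HopfAlgebra.mul_antipode_lTensor_comul_apply, hε, map_one]
  · rintro ⟨e, he, hmul⟩
    refine ⟨_, IsCasimir.isLeftIntegral he, ?_⟩
    rw [counit_rid_lTensor_counit, hmul, Bialgebra.counit_one]
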